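/- Let X ≥ 600. Suppose m is an integer with X ≤ m ≤ (1 + 0.1/log X)·X, and assume π(m) ≥ (m/log m)·(1 + 1/log m), where π is the prime counting function. Then m + π(m) > (1 + 0.1/log X)·X; that is, the forward jump m ↦ m + π(m) exits the window [X, (1+0.1/log X)·X]. -/
import Mathlib


open Real

lemma exp_six_le : Real.exp 6 ≤ 600 := by
  have h1 : Real.exp 1 < 2.7182818286 := Real.exp_one_lt_d9
  have h6 : Real.exp 6 = (Real.exp 1) ^ 6 := by
    rw [← Real.exp_nat_mul]; norm_num
  have hp : (Real.exp 1) ^ 6 < 2.7182818286 ^ 6 :=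
    pow_lt_pow_left₀ h1 (le_of_lt (Real.exp_pos 1)) (by norm_num)
  have : (2.7182818286 : ℝ) ^ 6 ≤ 600 := by norm_num
  linarith [h6 ▸ hp]

/-- the forward jump `m ↦ π(m)` from a point of the one-visit
window `[X, (1+0.1/log X)·X]` exits the window to the right. -/
theorem one_visit_exit (X : ℝ) (hX : 600 ≤ X) (m : ℕ)
    (hm1 : X ≤ (m : ℝ)) (hm2 : (m : ℝ) ≤ (1 + 0.1 / Real.log X) * X)
    (hpi : ((m : ℝ) / Real.log m) * (1 + 1 / Real.log m) ≤ (Nat.primeCounting m : ℝ)) :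
    (1 + 0.1 / Real.log X) * X < (m : ℝ) + (Nat.primeCounting m : ℝ) := by
  have hX0 : (0:ℝ) < X := by linarith
  have hm0 : (0:ℝ) < (m:ℝ) := by linarith
  have hlX : (6:ℝ) ≤ Real.log X := by
    rw [Real.le_log_iff_exp_le hX0]
    linarith [exp_six_le]
  have hlm : (6:ℝ) ≤ Real.log m := by
    rw [Real.le_log_iff_exp_le hm0]
    linarith [exp_six_le]
  have hlX0 : (0:ℝ) < Real.log X := by linarith
  have hlm0 : (0:ℝ) < Real.log m := by linarith
  -- m ≤ 2X
  have hfrac : 0.1 / Real.log X ≤ 1 := by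
    rw [div_le_one hlX0]; linarith
  have hm2X : (m:ℝ) ≤ 2 * X := by
    have : (1 + 0.1 / Real.log X) * X ≤ 2 * X := by nlinarith
    linarith
  -- log m < log X + 0.7
  have hlog2 : Real.log 2 < 0.7 := by linarith [Real.log_two_lt_d9]
  have hlmX : Real.log m < Real.log X + 0.7 := by
    have h1 : Real.log m ≤ Real.log (2 * X) :=
      Real.log_le_log hm0 hm2X
    rw [Real.log_mul (by norm_num) (ne_of_gt hX0)] at h1
    linarith
  -- π(m) ≥ m / log m
  have h2 : (m:ℝ) / Real.log m ≤ (Nat.primeCounting m : ℝ) := by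
    have hq : (0:ℝ) ≤ ((m:ℝ) / Real.log m) * (1 / Real.log m) :=
      mul_nonneg (le_of_lt (div_pos hm0 hlm0)) (by positivity)
    have he : (m:ℝ) / Real.log m * (1 + 1 / Real.log m)
        = (m:ℝ) / Real.log m + ((m:ℝ) / Real.log m) * (1 / Real.log m) := by ring
    linarith [he ▸ hpi]
  -- X / log m ≤ m / log m
  have h1 : X / Real.log m ≤ (m:ℝ) / Real.log m := by gcongr
  -- 0.1 X / log X < X / log m
  have h3 : 0.1 * X / Real.log X < X / Real.log m := by
    rw [div_lt_div_iff₀ hlX0 hlm0]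
    nlinarith
  have hkey : 0.1 * X / Real.log X < (Nat.primeCounting m : ℝ) := by linarith
  have hring : (1 + 0.1 / Real.log X) * X = X + 0.1 * X / Real.log X := by ring
  linarith [hring]
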